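/- For every ℓ ≥ 1, the function c ↦ P_c^{∘ℓ}(c) on ℂ* extends to a polynomial in c, of the form c · G_ℓ(c) where G_ℓ is a polynomial of degree (3^ℓ - 1)/2 with leading coefficient nonzero. -/
import Mathlib

/-- The critically marked cubic Siegel polynomial with multiplier `λ = l`:
`P_c(z) = λ z (1 - (1/2)(1 + 1/c) z + z²/(3c))`. -/
noncomputable def cubicP (l c z : ℂ) : ℂ :=
  l * z * (1 - (1/2) * (1 + 1/c) * z + z^2 / (3*c))

open Polynomial
theorem critical_orbit_is_polynomial (l : ℂ) (hl : l ≠ 0) (ℓ : ℕ) (hℓ : 1 ≤ ℓ) :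
    ∃ G : Polynomial ℂ, G.natDegree = (3^ℓ - 1) / 2 ∧ G.leadingCoeff ≠ 0 ∧
      ∀ c : ℂ, c ≠ 0 → (fun z => cubicP l c z)^[ℓ] c = c * G.eval c := by
  induction ℓ, hℓ using Nat.le_induction with
  | base =>
    refine ⟨C (-l/6) * X + C (l/2), ?_, ?_, ?_⟩
    · have : (C (-l/6) * X + C (l/2)).natDegree = 1 := by
        compute_degree!
      simp [this]
    · have hdeg : (C (-l/6) * X + C (l/2)).natDegree = 1 := by
        compute_degree!
      rw [Polynomial.leadingCoeff, hdeg]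
      simp [coeff_C]
      simpa using hl
    · intro c hc
      simp only [Function.iterate_one]
      unfold cubicP
      simp only [eval_add, eval_mul, eval_C, eval_X]
      field_simp
      ring
  | succ n hn ih =>
    obtain ⟨G, hdeg, hlc, hev⟩ := ih
    have hG0 : G ≠ 0 := fun h => hlc (by simp [h])
    set d := G.natDegree with hd
    have h3n : 3 ≤ 3 ^ n := by
      calc 3 = 3 ^ 1 := by norm_num
      _ ≤ 3 ^ n := Nat.pow_le_pow_right (by norm_num) hn
    have hd1 : 1 ≤ d := by omega
    obtain ⟨k, hk⟩ : Odd (3 ^ n) := Odd.pow ⟨1, by norm_num⟩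
    have hdk : d = k := by omega
    set A : Polynomial ℂ := X * G ^ 2 * C (1/3 : ℂ) with hA
    set B : Polynomial ℂ := 1 - (X + 1) * G * C (1/2 : ℂ) with hB
    have hAne : A ≠ 0 := by
      apply mul_ne_zero (mul_ne_zero X_ne_zero (pow_ne_zero 2 hG0))
      simp
    have hAdeg : A.natDegree = 2 * d + 1 := by
      rw [hA, natDegree_mul (mul_ne_zero X_ne_zero (pow_ne_zero 2 hG0)) (by simp : (C (1/3:ℂ)) ≠ 0),
        natDegree_mul X_ne_zero (pow_ne_zero 2 hG0), natDegree_X, natDegree_pow, natDegree_C]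
      ring
    have hAlc : A.leadingCoeff = G.leadingCoeff ^ 2 * (1/3) := by
      rw [hA, leadingCoeff_mul, leadingCoeff_mul, leadingCoeff_X, leadingCoeff_pow, leadingCoeff_C,
        one_mul]
    have hBdeg : B.natDegree ≤ d + 1 := by
      refine le_trans (natDegree_sub_le _ _) ?_
      simp only [natDegree_one, max_le_iff]
      refine ⟨by omega, ?_⟩
      refine le_trans natDegree_mul_le ?_
      have h1 : ((X + 1 : Polynomial ℂ) * G).natDegree ≤ 1 + d := by
        refine le_trans natDegree_mul_le ?_
        have : (X + 1 : Polynomial ℂ).natDegree ≤ 1 := by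
          refine le_trans (natDegree_add_le _ _) ?_
          simp
        omega
      simp only [natDegree_C]
      omega
    have hBlt : B.natDegree < A.natDegree := by omega
    set Q : Polynomial ℂ := A + B with hQ
    have hQdeg : Q.natDegree = 2 * d + 1 := by
      rw [hQ, natDegree_add_eq_left_of_natDegree_lt hBlt, hAdeg]
    have hQlc : Q.leadingCoeff = G.leadingCoeff ^ 2 * (1/3) := by
      rw [hQ, add_comm, leadingCoeff_add_of_degree_lt (degree_lt_degree hBlt), hAlc]
    have hQ0 : Q ≠ 0 := by
      intro h
      rw [h] at hQdeg
      simp only [natDegree_zero] at hQdeg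
      omega
    refine ⟨C l * G * Q, ?_, ?_, ?_⟩
    · rw [natDegree_mul (mul_ne_zero (by simpa using hl) hG0) hQ0,
        natDegree_mul (by simpa using hl : (C l : Polynomial ℂ) ≠ 0) hG0, natDegree_C, hQdeg]
      have h3 : 3 ^ (n + 1) = 3 * 3 ^ n := by ring
      omega
    · rw [leadingCoeff_mul, leadingCoeff_mul, leadingCoeff_C, hQlc]
      intro h
      rcases mul_eq_zero.mp h with h' | h'
      · rcases mul_eq_zero.mp h' with h'' | h''
        · exact hl h''
        · exact hlc h''
      · rcases mul_eq_zero.mp h' with h'' | h''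
        · exact hlc (pow_eq_zero_iff (by norm_num) |>.mp h'')
        · norm_num at h''
    · intro c hc
      rw [Function.iterate_succ_apply', hev c hc]
      unfold cubicP
      simp only [hQ, hA, hB, eval_add, eval_mul, eval_sub, eval_one, eval_pow, eval_C, eval_X]
      field_simp
      ring
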